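/- Let F be a strategyproof 2-facility mechanism on the line with approximation ratio at most ρ for 3 agents, and suppose the left-threshold of (i, a) is p ∈ ℝ (finite). Then for any 3-agent instance x with x_i = a and x_j, x_k ∈ (a, p], F_2(x) = max(x_j, x_k). -/

import Mathlib

noncomputable section

/-- Cost of an agent at location `a` under a pair of facilities. -/
def fcost (a : ℝ) (y : ℝ × ℝ) : ℝ := min |a - y.1| |a - y.2|

/-- Social cost: sum of the agents' distances to their nearest facility. -/
def scost {n : ℕ} (x : Fin n → ℝ) (y : ℝ × ℝ) : ℝ := ∑ i, fcost (x i) y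

/-- Optimal social cost over all placements of two facilities. -/
def optCost {n : ℕ} (x : Fin n → ℝ) : ℝ := ⨅ y : ℝ × ℝ, scost x y

/-- The mechanism outputs its facilities in increasing order. -/
def Ordered {n : ℕ} (F : (Fin n → ℝ) → ℝ × ℝ) : Prop := ∀ x, (F x).1 ≤ (F x).2

/-- No agent can strictly decrease her cost by misreporting her location. -/
def Strategyproof {n : ℕ} (F : (Fin n → ℝ) → ℝ × ℝ) : Prop :=
  ∀ (x : Fin n → ℝ) (i : Fin n) (y : ℝ),
    fcost (x i) (F x) ≤ fcost (x i) (F (Function.update x i y))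

/-- `F` has approximation ratio (at most) `ρ` for the social cost. -/
def ApproxRatio {n : ℕ} (F : (Fin n → ℝ) → ℝ × ℝ) (ρ : ℝ) : Prop :=
  ∀ x, scost x (F x) ≤ ρ * optCost x

/-- An `(i|j,k)`-well-separated 3-agent instance. -/
def WellSep (ρ : ℝ) (x : Fin 3 → ℝ) (i j k : Fin 3) : Prop :=
  x i < x j ∧ x j < x k ∧ ρ * (x k - x j) < x j - x i

/-- An `i`-left-well-separated 3-agent instance: agent `i` is isolated on the
left of the two nearby agents `j` and `k`. -/
def LeftWS (ρ : ℝ) (x : Fin 3 → ℝ) (i j k : Fin 3) : Prop :=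
  x i < min (x j) (x k) ∧
    ρ * (max (x j) (x k) - min (x j) (x k)) < min (x j) (x k) - x i

/-- The median of three reals. -/
def med3 (a b c : ℝ) : ℝ := max (min a b) (min (max a b) c)

/-!
Assume `x j ≤ x k` and let `h v` be the cost of agent `k` standing at `v`, the others as in `x`.
Strategyproofness makes `h` 1-Lipschitz, and `h (x j) = 0` since `(a, x j, x j)` has optimal
cost `0`. The threshold hypothesis leaves no facility in the hole `g < v`, `ρ (v - g) < g - a`:
otherwise move agent `j` to a point `s` between `g` and `v` close enough to `v`; the instance is
left-well-separated, so `j` is served only at distance `v - s`, while reporting her old position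
brings `g` back, which is closer.
Hence right of a zero `w` of `h` the facility nearest to `v` sits at `v + h v`, and the
intermediate value theorem for `v ↦ v + h v` produces zeros of `h` beyond `w`; sweeping from
`x j` gives `h (x k) = 0`. That facility at `x k` is the right one: were it the left one,
agent `i` would gain by reporting `x j`.
-/

open Function Set

lemma fcost_nonneg (u : ℝ) (y : ℝ × ℝ) : 0 ≤ fcost u y :=
  le_min (abs_nonneg _) (abs_nonneg _)

lemma fcost_le_of_eq {u g : ℝ} {y : ℝ × ℝ} (hg : g = y.1 ∨ g = y.2) : fcost u y ≤ |u - g| := by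
  rcases hg with rfl | rfl
  exacts [min_le_left _ _, min_le_right _ _]

lemma exists_fcost_eq (u : ℝ) (y : ℝ × ℝ) : ∃ g, (g = y.1 ∨ g = y.2) ∧ fcost u y = |u - g| := by
  rcases min_choice |u - y.1| |u - y.2| with h | h
  exacts [⟨_, Or.inl rfl, h⟩, ⟨_, Or.inr rfl, h⟩]

lemma fcost_eq_zero_iff {u : ℝ} {y : ℝ × ℝ} : fcost u y = 0 ↔ u = y.1 ∨ u = y.2 := by
  constructor
  · intro h
    obtain ⟨g, hg, hu⟩ := exists_fcost_eq u y
    rw [h, eq_comm, abs_eq_zero, sub_eq_zero] at hu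
    exact hu ▸ hg
  · intro h
    exact le_antisymm ((fcost_le_of_eq h).trans_eq (by simp)) (fcost_nonneg u y)

@[simp]
lemma fcost_fst (u w : ℝ) : fcost u (u, w) = 0 := fcost_eq_zero_iff.mpr (Or.inl rfl)

@[simp]
lemma fcost_snd (u w : ℝ) : fcost u (w, u) = 0 := fcost_eq_zero_iff.mpr (Or.inr rfl)

lemma fcost_le_fcost_add_abs_sub (u u' : ℝ) (y : ℝ × ℝ) : fcost u y ≤ fcost u' y + |u - u'| := by
  obtain ⟨g, hg, hu'⟩ := exists_fcost_eq u' y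
  calc fcost u y ≤ |u - g| := fcost_le_of_eq hg
    _ ≤ |u - u'| + |u' - g| := abs_sub_le u u' g
    _ = fcost u' y + |u - u'| := by rw [hu', add_comm]

lemma snd_eq_of_fcost_lt {a b : ℝ} {y : ℝ × ℝ} (hy : y.1 ≤ y.2) (hb : fcost b y = 0)
    (ha : fcost a y < b - a) : y.2 = b := by
  rcases fcost_eq_zero_iff.mp hb with h | h
  · have hab : a < b := by linarith [fcost_nonneg a y]
    refine absurd ha (not_lt.mpr (le_min ?_ ?_))
    · rw [← h, abs_sub_comm, abs_of_pos (by linarith)]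
    · rw [abs_sub_comm, abs_of_pos (by linarith)]; linarith
  · exact h.symm

lemma fcost_le_scost {n : ℕ} (x : Fin n → ℝ) (y : ℝ × ℝ) (l : Fin n) :
    fcost (x l) y ≤ scost x y :=
  Finset.single_le_sum (fun l _ => fcost_nonneg (x l) y) (Finset.mem_univ l)

lemma optCost_le_scost {n : ℕ} (x : Fin n → ℝ) (y : ℝ × ℝ) : optCost x ≤ scost x y :=
  ciInf_le ⟨0, by rintro _ ⟨y', rfl⟩; exact Finset.sum_nonneg fun l _ => fcost_nonneg (x l) y'⟩ y

lemma scost_three (x : Fin 3 → ℝ) (y : ℝ × ℝ) {i j k : Fin 3}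
    (hij : i ≠ j) (hik : i ≠ k) (hjk : j ≠ k) :
    scost x y = fcost (x i) y + fcost (x j) y + fcost (x k) y := by
  unfold scost
  fin_cases i <;> fin_cases j <;> fin_cases k <;> simp_all [Fin.sum_univ_three] <;> ring

namespace ApproxRatio

lemma scost_le {n : ℕ} {F : (Fin n → ℝ) → ℝ × ℝ} {ρ : ℝ} (happ : ApproxRatio F ρ) (hρ : 0 ≤ ρ)
    (x : Fin n → ℝ) (y : ℝ × ℝ) : scost x (F x) ≤ ρ * scost x y :=
  (happ x).trans (mul_le_mul_of_nonneg_left (optCost_le_scost x y) hρ)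

lemma fcost_eq_zero_of_eq {F : (Fin 3 → ℝ) → ℝ × ℝ} {ρ : ℝ} (happ : ApproxRatio F ρ)
    (hρ : 0 ≤ ρ) {i j k : Fin 3} (hij : i ≠ j) (hik : i ≠ k) (hjk : j ≠ k)
    {x : Fin 3 → ℝ} (h : x j = x k) (l : Fin 3) : fcost (x l) (F x) = 0 := by
  have hopt : scost x (x i, x k) = 0 := by
    rw [scost_three x _ hij hik hjk, h]
    simp
  refine le_antisymm ?_ (fcost_nonneg _ _)
  calc fcost (x l) (F x) ≤ scost x (F x) := fcost_le_scost x _ l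
    _ ≤ 0 := by simpa [hopt] using happ.scost_le hρ x (x i, x k)

lemma sub_le_fcost_of_snd_eq {F : (Fin 3 → ℝ) → ℝ × ℝ} {ρ : ℝ} (happ : ApproxRatio F ρ)
    (hρ : 0 ≤ ρ) {i j k : Fin 3} (hij : i ≠ j) (hik : i ≠ k) (hjk : j ≠ k) {y : Fin 3 → ℝ}
    (hjk_lt : y j < y k) (hsep : (ρ + 1) * (y k - y j) ≤ y j - y i) (hFy : (F y).2 = y k) :
    y k - y j ≤ fcost (y j) (F y) := by
  have hscost : scost y (y i, y k) ≤ y k - y j := by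
    rw [scost_three y _ hij hik hjk, fcost_fst, fcost_snd, zero_add, add_zero]
    exact (fcost_le_of_eq (Or.inr rfl)).trans_eq (by rw [abs_sub_comm, abs_of_pos (by linarith)])
  have hcost_i : fcost (y i) (F y) ≤ ρ * (y k - y j) :=
    calc fcost (y i) (F y) ≤ scost y (F y) := fcost_le_scost y _ i
      _ ≤ ρ * scost y (y i, y k) := happ.scost_le hρ y _
      _ ≤ ρ * (y k - y j) := mul_le_mul_of_nonneg_left hscost hρ
  -- the left facility serves `y i`, so it lies too far left to serve `y j`
  have hF1 : |y i - (F y).1| ≤ ρ * (y k - y j) := by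
    obtain ⟨g, hg, hcost⟩ := exists_fcost_eq (y i) (F y)
    rcases hg with rfl | hg
    · exact hcost ▸ hcost_i
    · rw [hg, hFy, abs_sub_comm, abs_of_pos (by nlinarith)] at hcost
      nlinarith
  refine le_min ?_ ?_
  · have htri := abs_sub_le (y j) (F y).1 (y i)
    rw [abs_of_pos (by nlinarith), abs_sub_comm (F y).1] at htri
    linarith
  · rw [hFy, abs_sub_comm, abs_of_pos (by linarith)]

end ApproxRatio

def truthfulCost {n : ℕ} (F : (Fin n → ℝ) → ℝ × ℝ) (x : Fin n → ℝ) (k : Fin n) (v : ℝ) : ℝ :=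
  fcost v (F (update x k v))

namespace Strategyproof

variable {n : ℕ} {F : (Fin n → ℝ) → ℝ × ℝ}

lemma truthfulCost_le (hsp : Strategyproof F) (x : Fin n → ℝ) (k : Fin n) (v v' : ℝ) :
    truthfulCost F x k v ≤ fcost v (F (update x k v')) := by
  simpa [truthfulCost] using hsp (update x k v) k v'

lemma lipschitzWith_truthfulCost (hsp : Strategyproof F) (x : Fin n → ℝ) (k : Fin n) :
    LipschitzWith 1 (truthfulCost F x k) :=
  LipschitzWith.of_le_add fun v v' =>
    (hsp.truthfulCost_le x k v v').trans (fcost_le_fcost_add_abs_sub v v' _)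

end Strategyproof

/-- The part of "the left-threshold of `(i, a)` is `p`" used here: on `i`-left-well-separated
instances with `y i = a` and the two other agents left of `p`, the right facility is at the
rightmost agent. -/
def LeftThresholdBelow (F : (Fin 3 → ℝ) → ℝ × ℝ) (ρ : ℝ) (i j k : Fin 3) (a p : ℝ) : Prop :=
  ∀ y : Fin 3 → ℝ, y i = a → LeftWS ρ y i j k → y j ≤ p → y k ≤ p → (F y).2 = max (y j) (y k)

namespace LeftThresholdBelow

variable {F : (Fin 3 → ℝ) → ℝ × ℝ} {ρ : ℝ} {i j k : Fin 3} {a p : ℝ}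

lemma swap (hthr : LeftThresholdBelow F ρ i j k a p) : LeftThresholdBelow F ρ i k j a p := by
  intro y hya hy hyk hyj
  rw [max_comm]
  refine hthr y hya ?_ hyj hyk
  unfold LeftWS at hy ⊢
  rwa [min_comm (y j), max_comm (y j)]

/-- No facility of `F z` lies in the hole `((ρ * z k + a) / (ρ + 1), z k)`. -/
lemma sub_le_mul_sub_of_lt (hthr : LeftThresholdBelow F ρ i j k a p) (hρ : 0 ≤ ρ)
    (hsp : Strategyproof F) (happ : ApproxRatio F ρ) (hij : i ≠ j) (hik : i ≠ k) (hjk : j ≠ k)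
    {z : Fin 3 → ℝ} (hzi : z i = a) (hzp : z k ≤ p) {g : ℝ} (hg : g = (F z).1 ∨ g = (F z).2)
    (hgz : g < z k) : g - a ≤ ρ * (z k - g) := by
  by_contra! hgap
  set v := z k
  have hga : a < g := by nlinarith
  -- `s` must be close enough to `v` for `update z j s` to be left-well-separated even with the
  -- factor `ρ + 1`, yet nearer to `g` than to `v`
  have hgap' : (a + (ρ + 1) * v) / (ρ + 2) < (g + v) / 2 := by
    rw [div_lt_div_iff₀ (by linarith) two_pos]
    nlinarith
  obtain ⟨s, hs_left, hs_right⟩ := exists_between hgap'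
  rw [div_lt_iff₀' (by linarith)] at hs_left
  set y := update z j s
  have hyi : y i = a := by simp [y, hij, hzi]
  have hyj : y j = s := by simp [y]
  have hyk : y k = v := by simp [y, hjk.symm, v]
  have hsv : s < v := by linarith
  have hρs : ρ * (v - s) < s - a := by linarith
  have hsa : a < s := by linarith [mul_nonneg hρ (sub_nonneg.mpr hsv.le)]
  have hFy : (F y).2 = y k := by
    have hmin : min (y j) (y k) = s := by rw [hyj, hyk, min_eq_left hsv.le]
    have hmax : max (y j) (y k) = y k := by rw [hyj, max_eq_right (hyk ▸ hsv.le)]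
    rw [hthr y hyi ⟨by rw [hmin, hyi]; linarith, by rw [hmin, hmax, hyk, hyi]; exact hρs⟩
      (by rw [hyj]; linarith) (by rw [hyk]; exact hzp), hmax]
  have hcost_j := happ.sub_le_fcost_of_snd_eq hρ hij hik hjk (by rwa [hyj, hyk])
    (by rw [hyi, hyj, hyk]; linarith) hFy
  rw [hyj, hyk] at hcost_j
  have hdev : fcost s (F y) ≤ |s - g| := by
    have hback : update y j (z j) = z := by simp [y]
    calc fcost s (F y) = fcost (y j) (F y) := by rw [hyj]
      _ ≤ fcost (y j) (F (update y j (z j))) := hsp y j (z j)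
      _ = fcost s (F z) := by rw [hyj, hback]
      _ ≤ |s - g| := fcost_le_of_eq hg
  have hsg : |s - g| < v - s := by
    rw [abs_sub_lt_iff]; constructor <;> linarith
  linarith

lemma add_truthfulCost_eq (hthr : LeftThresholdBelow F ρ i j k a p) (hρ : 0 ≤ ρ)
    (hsp : Strategyproof F) (happ : ApproxRatio F ρ) (hij : i ≠ j) (hik : i ≠ k) (hjk : j ≠ k)
    {x : Fin 3 → ℝ} (hxi : x i = a) {w v : ℝ} (hw : truthfulCost F x k w = 0) (hwv : w ≤ v)
    (hvp : v ≤ p) (hρv : ρ * (v - w) < w - a) :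
    v + truthfulCost F x k v = (F (update x k v)).1 ∨
      v + truthfulCost F x k v = (F (update x k v)).2 := by
  obtain ⟨g, hg, hcost⟩ := exists_fcost_eq v (F (update x k v))
  change truthfulCost F x k v = |v - g| at hcost
  have hle : truthfulCost F x k v ≤ v - w :=
    calc truthfulCost F x k v ≤ fcost v (F (update x k w)) := hsp.truthfulCost_le x k v w
      _ ≤ |v - w| := fcost_le_of_eq (fcost_eq_zero_iff.mp hw)
      _ = v - w := abs_of_nonneg (sub_nonneg.mpr hwv)
  rcases le_or_gt v g with hvg | hgv
  · rwa [hcost, abs_sub_comm, abs_of_nonneg (sub_nonneg.mpr hvg), add_sub_cancel]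
  · rw [abs_of_pos (sub_pos.mpr hgv)] at hcost
    have hhole : g - a ≤ ρ * (v - g) := by
      simpa using hthr.sub_le_mul_sub_of_lt hρ hsp happ hij hik hjk (z := update x k v)
        (by simp [hik, hxi]) (by simpa using hvp) hg (by simpa using hgv)
    have : ρ * (v - g) ≤ ρ * (v - w) := mul_le_mul_of_nonneg_left (by linarith) hρ
    linarith

lemma exists_truthfulCost_eq_zero_gt (hthr : LeftThresholdBelow F ρ i j k a p) (hρ : 0 ≤ ρ)
    (hsp : Strategyproof F) (happ : ApproxRatio F ρ) (hij : i ≠ j) (hik : i ≠ k) (hjk : j ≠ k)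
    {x : Fin 3 → ℝ} (hxi : x i = a) {w c : ℝ} (hw : truthfulCost F x k w = 0) (haw : a < w)
    (hwc : w < c) (hcp : c ≤ p) : ∃ u ∈ Ioc w c, truthfulCost F x k u = 0 := by
  set h := truthfulCost F x k
  set u := min c (w + (w - a) / (ρ + 1))
  have hwu : w < u := lt_min hwc (lt_add_of_pos_right w (by positivity))
  have hρu : ρ * (u - w) < w - a := by
    have : (ρ + 1) * (u - w) ≤ w - a := by
      rw [← le_div_iff₀' (by positivity)]
      exact sub_le_iff_le_add'.mpr (min_le_right _ _)
    linarith
  -- `v ↦ v + h v` runs from `w` to beyond `u`, and its values are facilities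
  obtain ⟨v, hv, hvu⟩ : u ∈ (fun v => v + h v) '' Icc w u :=
    intermediate_value_Icc hwu.le
      ((continuous_id.add (hsp.lipschitzWith_truthfulCost x k).continuous).continuousOn)
      ⟨by simp [h, hw, hwu.le], le_add_of_nonneg_right (fcost_nonneg _ _)⟩
  have hfac := hthr.add_truthfulCost_eq hρ hsp happ hij hik hjk hxi hw hv.1
    ((hv.2.trans (min_le_left _ _)).trans hcp)
    (lt_of_le_of_lt (mul_le_mul_of_nonneg_left (by linarith [hv.2]) hρ) hρu)
  refine ⟨u, ⟨hwu, min_le_left _ _⟩, le_antisymm ?_ (fcost_nonneg _ _)⟩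
  calc h u ≤ fcost u (F (update x k v)) := hsp.truthfulCost_le x k u v
    _ = 0 := fcost_eq_zero_iff.mpr (hvu ▸ hfac)

lemma truthfulCost_eq_zero_of_le (hthr : LeftThresholdBelow F ρ i j k a p) (hρ : 0 ≤ ρ)
    (hsp : Strategyproof F) (happ : ApproxRatio F ρ) (hij : i ≠ j) (hik : i ≠ k) (hjk : j ≠ k)
    {x : Fin 3 → ℝ} (hxi : x i = a) {b c : ℝ} (hb : truthfulCost F x k b = 0) (hab : a < b)
    (hbc : b ≤ c) (hcp : c ≤ p) : truthfulCost F x k c = 0 := by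
  have hclosed : IsClosed ({v | truthfulCost F x k v = 0} ∩ Icc b c) :=
    (isClosed_eq (hsp.lipschitzWith_truthfulCost x k).continuous continuous_const).inter
      isClosed_Icc
  refine hclosed.mem_of_ge_of_forall_exists_gt hb hbc fun w ⟨hw, hbw, hwc⟩ => ?_
  obtain ⟨u, hu, hu0⟩ := hthr.exists_truthfulCost_eq_zero_gt hρ hsp happ hij hik hjk hxi hw
    (hab.trans_le hbw) hwc hcp
  exact ⟨u, hu0, hu⟩

end LeftThresholdBelow

theorem non_separated_inside_general (F : (Fin 3 → ℝ) → ℝ × ℝ) (ρ : ℝ) (hρ : 1 ≤ ρ)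
    (hord : Ordered F) (hsp : Strategyproof F) (happ : ApproxRatio F ρ)
    (i j k : Fin 3) (hij : i ≠ j) (hik : i ≠ k) (hjk : j ≠ k)
    (a p : ℝ)
    (hsep : ∀ y : Fin 3 → ℝ, y i = a → LeftWS ρ y i j k →
      y j ≤ p → y k ≤ p → (F y).2 = max (y j) (y k))
    (x : Fin 3 → ℝ) (hxa : x i = a)
    (hj : a < x j) (hj' : x j ≤ p) (hk : a < x k) (hk' : x k ≤ p) :
    (F x).2 = max (x j) (x k) := by
  have hρ0 : 0 ≤ ρ := by linarith
  wlog hjk_le : x j ≤ x k generalizing j k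
  · rw [max_comm]
    exact this k j hik hij hjk.symm (LeftThresholdBelow.swap hsep) hk hk' hj hj'
      (le_of_not_ge hjk_le)
  have hserved : fcost (x k) (F x) = 0 := by
    have hstart : truthfulCost F x k (x j) = 0 := by
      simpa [truthfulCost, hjk] using
        happ.fcost_eq_zero_of_eq hρ0 hij hik hjk (x := update x k (x j)) (by simp [hjk]) k
    simpa [truthfulCost] using LeftThresholdBelow.truthfulCost_eq_zero_of_le hsep hρ0 hsp happ
      hij hik hjk hxa hstart hj hjk_le hk'
  have hcost_i : fcost a (F x) < x k - a := by
    rcases hjk_le.lt_or_eq with hlt | heq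
    · have hjoin : fcost (x j) (F (update x i (x j))) = 0 := by
        simpa [hij] using happ.fcost_eq_zero_of_eq hρ0 hik.symm hjk.symm hij
          (x := update x i (x j)) (by simp [hij.symm]) i
      calc fcost a (F x) ≤ fcost a (F (update x i (x j))) := hxa ▸ hsp x i (x j)
        _ ≤ |a - x j| := fcost_le_of_eq (fcost_eq_zero_iff.mp hjoin)
        _ < x k - a := by rw [abs_sub_comm, abs_of_pos (by linarith)]; linarith
    · rw [← hxa, happ.fcost_eq_zero_of_eq hρ0 hij hik hjk heq i]
      linarith
  rw [max_eq_right hjk_le]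
  exact snd_eq_of_fcost_lt (hord x) hserved hcost_i

/-- Lemma `non-separated-inside`: if `(i, a)` has finite left-threshold `p`,
then for any 3-agent instance `x` with `x_i = a` and `x_j, x_k ∈ (a, p]`,
the rightmost facility is at `max(x_j, x_k)`. -/
theorem non_separated_inside (F : (Fin 3 → ℝ) → ℝ × ℝ) (ρ : ℝ) (hρ : 1 ≤ ρ)
    (hord : Ordered F) (hsp : Strategyproof F) (happ : ApproxRatio F ρ)
    (i j k : Fin 3) (hij : i ≠ j) (hik : i ≠ k) (hjk : j ≠ k)
    (a p : ℝ) (hpa : a ≤ p)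
    (hsep : ∀ y : Fin 3 → ℝ, y i = a → LeftWS ρ y i j k →
      y j ≤ p → y k ≤ p → (F y).2 = max (y j) (y k))
    (x : Fin 3 → ℝ) (hxa : x i = a)
    (hj : a < x j) (hj' : x j ≤ p) (hk : a < x k) (hk' : x k ≤ p) :
    (F x).2 = max (x j) (x k) :=
  non_separated_inside_general F ρ hρ hord hsp happ i j k hij hik hjk a p hsep x hxa hj hj' hk hk'
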